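/- Let V be a partial order viewed as a category, ♭ : V → V monotone with ♭(v) ≤ v and ♭(♭(v)) = ♭(v), and let J be the quantization Grothendieck topology on V (a sieve on v covers iff it contains the morphism ♭(v) ⟶ v). Then a presheaf R : V^op ⥤ Type is a sheaf for J if and only if for every v ∈ V the restriction map R(♭(v) ⟶ v) : R(v) → R(♭(v)) is a bijection. -/
import Mathlib


open CategoryTheory

/-- The quantization Grothendieck topology on a partial order `V` induced by a
monotone idempotent deflation `♭ : V → V`: a sieve on `v` covers iff it contains
the morphism `♭(v) ⟶ v`. -/
def quantTopology {V : Type*} [PartialOrder V] {b : V → V} (hb : Monotone b)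
    (hle : ∀ v, b v ≤ v) (hidem : ∀ v, b (b v) = b v) :
    GrothendieckTopology V where
  sieves v := { S | S.arrows (homOfLE (hle v)) }
  top_mem' v := trivial
  pullback_stable' := by
    intro v v' S f hS
    exact S.downward_closed hS (homOfLE (hb (leOfHom f)))
  transitive' := by
    intro v S hS R hR
    have key : ∀ {x y : V} (_ : x = y) (hx : x ≤ v) (hy : y ≤ v),
        R.arrows (homOfLE hx) → R.arrows (homOfLE hy) := by
      rintro x y rfl hx hy h
      exact h
    exact key (hidem v) ((hle (b v)).trans (hle v)) (hle v) (hR hS)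



open Opposite in
private lemma quant_aux {V : Type*} [PartialOrder V] (R : Vᵒᵖ ⥤ Type*)
    {a c d : V} (h1 : c ≤ d) (h2 : a ≤ c) (z : R.obj (op d)) :
    R.map (homOfLE h2).op (R.map (homOfLE h1).op z) =
      R.map (homOfLE (h2.trans h1)).op z := by
  rw [← FunctorToTypes.map_comp_apply]
  congr 1

open Opposite in
theorem isSheaf_quantTopology_iff_bijective'
    {V : Type*} [PartialOrder V] {b : V → V} (hb : Monotone b)
    (hle : ∀ v, b v ≤ v) (hidem : ∀ v, b (b v) = b v)
    (R : Vᵒᵖ ⥤ Type*) :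
    Presieve.IsSheaf (quantTopology hb hle hidem) R ↔
      ∀ v : V, Function.Bijective (R.map (homOfLE (hle v)).op) := by
  constructor
  · intro hR v
    -- the covering sieve of all `u ≤ b v`
    let S : Sieve v :=
      { arrows := fun u _ => u ≤ b v
        downward_closed := fun {u u'} f h g => (leOfHom g).trans h }
    have hS : S ∈ (quantTopology hb hle hidem) v := le_refl (b v)
    have hsheaf := hR S hS
    constructor
    · intro t₁ t₂ ht
      have := hsheaf (fun u f _ => R.map f.op t₁) ?_
      · obtain ⟨t, _, huniq⟩ := this
        have h1 : t₁ = t := huniq t₁ (fun u f hf => rfl)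
        have h2 : t₂ = t := huniq t₂ (by
          intro u f hf
          show R.map f.op t₂ = R.map f.op t₁
          have hf' : u ≤ b v := hf
          have ef : f = homOfLE ((hf'.trans (hle v))) := Subsingleton.elim _ _
          rw [ef, ← quant_aux R (hle v) hf', ← quant_aux R (hle v) hf', ht])
        rw [h1, h2]
      · intro u₁ u₂ w g₁ g₂ f₁ f₂ h₁ h₂ _
        show R.map g₁.op (R.map f₁.op t₁) = R.map g₂.op (R.map f₂.op t₁)
        rw [← FunctorToTypes.map_comp_apply, ← FunctorToTypes.map_comp_apply,
          ← op_comp, ← op_comp]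
        congr 1
    · intro y
      let x : Presieve.FamilyOfElements R S.arrows :=
        fun u f hf => R.map (homOfLE (show u ≤ b v from hf)).op y
      have hx : x.Compatible := by
        intro u₁ u₂ w g₁ g₂ f₁ f₂ h₁ h₂ _
        show R.map g₁.op (R.map _ y) = R.map g₂.op (R.map _ y)
        rw [show g₁ = homOfLE (leOfHom g₁) from Subsingleton.elim _ _,
          show g₂ = homOfLE (leOfHom g₂) from Subsingleton.elim _ _,
          quant_aux, quant_aux]
      obtain ⟨t, ht, -⟩ := hsheaf x hx
      refine ⟨t, ?_⟩
      have := ht (homOfLE (hle v)) (le_refl (b v))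
      rw [this]
      show R.map (homOfLE (le_refl (b v))).op y = y
      rw [show homOfLE (le_refl (b v)) = 𝟙 (b v) from rfl]
      simp
  · intro hbij X S hS x hx
    have hS' : S.arrows (homOfLE (hle X)) := hS
    obtain ⟨t, ht⟩ := (hbij X).2 (x (homOfLE (hle X)) hS')
    refine ⟨t, ?_, ?_⟩
    · intro u f hf
      apply (hbij u).1
      have hbu : b u ≤ b X := hb (leOfHom f)
      have key := hx (f₁ := homOfLE (hle X)) (f₂ := f)
        (homOfLE hbu) (homOfLE (hle u)) hS' hf (Subsingleton.elim _ _)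
      calc R.map (homOfLE (hle u)).op (R.map f.op t)
          = R.map ((homOfLE (hle u)) ≫ f).op t := by
            rw [op_comp, FunctorToTypes.map_comp_apply]
        _ = R.map ((homOfLE hbu) ≫ homOfLE (hle X)).op t := by
            congr 1
        _ = R.map (homOfLE hbu).op (R.map (homOfLE (hle X)).op t) := by
            rw [op_comp, FunctorToTypes.map_comp_apply]
        _ = R.map (homOfLE hbu).op (x (homOfLE (hle X)) hS') := by rw [ht]
        _ = R.map (homOfLE (hle u)).op (x f hf) := key
    · intro t' ht'
      apply (hbij X).1
      rw [ht, ← ht' (homOfLE (hle X)) hS']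

/-- A presheaf `R : Vᵒᵖ ⥤ Type` is a sheaf for the quantization
Grothendieck topology iff each restriction map `R(♭(v) ⟶ v) : R(v) → R(♭(v))` is a
bijection. -/
theorem isSheaf_quantTopology_iff_bijective
    {V : Type*} [PartialOrder V] {b : V → V} (hb : Monotone b)
    (hle : ∀ v, b v ≤ v) (hidem : ∀ v, b (b v) = b v)
    (R : Vᵒᵖ ⥤ Type*) :
    Presieve.IsSheaf (quantTopology hb hle hidem) R ↔
      ∀ v : V, Function.Bijective (R.map (homOfLE (hle v)).op) := by
  exact isSheaf_quantTopology_iff_bijective' hb hle hidem R
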